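/- arXiv:2504.19980 — 3 statements merged into one kernel-verified Lean document; each statement's English description precedes it below -/
import Mathlib

section
/- Suppose that for every i ∈ A the value (e^{x_i}/∑_{j∈A} e^{x_j})·(1−(n−k)u) is at least u. Then the vector b(x) defined by b_i(x) = (e^{x_i}/∑_{j∈A} e^{x_j})·(1−(n−k)u) for i ∈ A and b_i(x) = u for i ∉ A is the unique minimizer of the function b ↦ ∑_{i=1}^n b_i ln(b_i) − xᵀb over the set {b ∈ ℝⁿ : ∑_{i=1}^n b_i = 1 and b_i ≥ u for all i}. -/
/-!
The objective `F c = ∑ cᵢ log cᵢ - xᵀc` is strictly convex, so `F c > F b + ∇F(b)·(c - b)` for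
`c ≠ b`, and it suffices that `∇F(b)·(c - b) ≥ 0` for every feasible `c` (the KKT conditions).
On `A` the partial derivative `log bᵢ + 1 - xᵢ` takes a common value `μ`. Off `A` it is at least
`μ`, because `softmaxᵢ(x) < u` there forces `(1 - (n - k) u) ∑ⱼ e^{xⱼ} ≤ ∑_{j ∈ A} e^{xⱼ}`; and
there `cᵢ ≥ u = bᵢ`. Since `∑ (cᵢ - bᵢ) = 0`, this gives `∇F(b)·(c - b) ≥ μ ∑ (cᵢ - bᵢ) = 0`.
-/

open Real Finset

theorem mul_log_tangent_lt {s t : ℝ} (hs : 0 < s) (ht : 0 < t) (hne : t ≠ s) :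
    (log s + 1) * (t - s) < t * log t - s * log s := by
  have hlog : log (s / t) < s / t - 1 :=
    log_lt_sub_one_of_pos (div_pos hs ht) (by rwa [ne_eq, div_eq_one_iff_eq ht.ne', eq_comm])
  rw [log_div hs.ne' ht.ne'] at hlog
  have hscaled : t * (log s - log t) < t * (s / t - 1) := mul_lt_mul_of_pos_left hlog ht
  rw [mul_sub, mul_sub, mul_one, mul_div_cancel₀ s ht.ne'] at hscaled
  linarith

theorem mul_log_tangent_le {s t : ℝ} (hs : 0 < s) (ht : 0 < t) :
    (log s + 1) * (t - s) ≤ t * log t - s * log s := by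
  rcases eq_or_ne t s with rfl | hne
  · simp
  · exact (mul_log_tangent_lt hs ht hne).le

section

variable {ι : Type*} [Fintype ι]

noncomputable def entropicObjective (x c : ι → ℝ) : ℝ :=
  ∑ i, c i * log (c i) - ∑ i, x i * c i

theorem entropicObjective_lt_of_ne {x b c : ι → ℝ} (hb : ∀ i, 0 < b i) (hc : ∀ i, 0 < c i)
    (hne : c ≠ b) (hdir : 0 ≤ ∑ i, (log (b i) + 1 - x i) * (c i - b i)) :
    entropicObjective x b < entropicObjective x c := by
  obtain ⟨j, hj⟩ := Function.ne_iff.mp hne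
  have htangent : ∑ i, (log (b i) + 1) * (c i - b i) <
      ∑ i, (c i * log (c i) - b i * log (b i)) :=
    sum_lt_sum (fun i _ => mul_log_tangent_le (hb i) (hc i))
      ⟨j, mem_univ j, mul_log_tangent_lt (hb j) (hc j) hj⟩
  have hsplit : ∑ i, (log (b i) + 1 - x i) * (c i - b i) =
      ∑ i, (log (b i) + 1) * (c i - b i) - (∑ i, x i * c i - ∑ i, x i * b i) := by
    simp only [sub_mul _ (x _), mul_sub (x _), sum_sub_distrib]
  rw [sum_sub_distrib] at htangent
  unfold entropicObjective
  linarith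

theorem sum_mul_sub_nonneg_of_slackness {g b c : ι → ℝ} {μ : ℝ}
    (hsum : ∑ i, c i = ∑ i, b i) (hg : ∀ i, g i = μ ∨ (μ ≤ g i ∧ b i ≤ c i)) :
    0 ≤ ∑ i, g i * (c i - b i) := by
  have hzero : ∑ i, μ * (c i - b i) = 0 := by
    rw [← mul_sum, sum_sub_distrib, hsum, sub_self, mul_zero]
  rw [← hzero]
  refine sum_le_sum fun i _ => ?_
  rcases hg i with h | ⟨hμ, hbc⟩
  · rw [h]
  · exact mul_le_mul_of_nonneg_right hμ (sub_nonneg.mpr hbc)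

theorem entropicObjective_lt_of_kkt {x b c : ι → ℝ} {u μ : ℝ} (hu : 0 < u)
    (hb : ∀ i, u ≤ b i) (hkkt : ∀ i, log (b i) - x i = μ ∨ (b i = u ∧ μ ≤ log (b i) - x i))
    (hc : ∀ i, u ≤ c i) (hsum : ∑ i, c i = ∑ i, b i) (hne : c ≠ b) :
    entropicObjective x b < entropicObjective x c := by
  refine entropicObjective_lt_of_ne (fun i => hu.trans_le (hb i)) (fun i => hu.trans_le (hc i))
    hne (sum_mul_sub_nonneg_of_slackness (μ := μ + 1) hsum fun i => ?_)
  rcases hkkt i with h | ⟨hbu, hμ⟩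
  · left; linarith
  · right; exact ⟨by linarith, hbu ▸ hc i⟩

theorem exists_le_softmax [Nonempty ι] (x : ι → ℝ) {u : ℝ} (hu : u * Fintype.card ι ≤ 1) :
    ∃ i, u ≤ exp (x i) / ∑ j, exp (x j) := by
  have hT : ∑ j, exp (x j) ≠ 0 := (sum_pos (fun j _ => exp_pos _) univ_nonempty).ne'
  obtain ⟨i, -, hi⟩ := exists_le_of_sum_le (f := fun _ => u) univ_nonempty <| by
    rwa [← sum_div, div_self hT, sum_const, card_univ, nsmul_eq_mul, mul_comm]
  exact ⟨i, hi⟩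

theorem sum_sub_card_compl_mul_le [DecidableEq ι] {w : ι → ℝ} {a : ℝ} (A : Finset ι) (h : ∀ i ∉ A, w i ≤ a) :
    ∑ i, w i - #Aᶜ * a ≤ ∑ i ∈ A, w i := by
  have hcompl := sum_le_card_nsmul Aᶜ w a fun i hi => h i (mem_compl.mp hi)
  rw [nsmul_eq_mul] at hcompl
  rw [← sum_add_sum_compl A w]
  linarith

variable [DecidableEq ι]

noncomputable def boundedSoftmax (x : ι → ℝ) (u : ℝ) (A : Finset ι) (i : ι) : ℝ :=
  if i ∈ A then (exp (x i) / ∑ j ∈ A, exp (x j)) * (1 - #Aᶜ * u) else u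

variable {x : ι → ℝ} {u : ℝ} {A : Finset ι}

theorem sum_boundedSoftmax (hA : A.Nonempty) : ∑ i, boundedSoftmax x u A i = 1 := by
  have hS : ∑ j ∈ A, exp (x j) ≠ 0 := (sum_pos (fun j _ => exp_pos _) hA).ne'
  rw [← sum_add_sum_compl A]
  have hin : ∑ i ∈ A, boundedSoftmax x u A i = 1 - #Aᶜ * u := by
    rw [sum_congr rfl fun i hi => by rw [boundedSoftmax, if_pos hi], ← sum_mul, ← sum_div, div_self hS, one_mul]
  have hout : ∑ i ∈ Aᶜ, boundedSoftmax x u A i = #Aᶜ * u := by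
    rw [sum_congr rfl fun i hi => by rw [boundedSoftmax, if_neg (mem_compl.mp hi)], sum_const, nsmul_eq_mul]
  rw [hin, hout, sub_add_cancel]

theorem boundedSoftmax_kkt (hu : 0 < u) (hA : A.Nonempty) (hQ : 0 < 1 - #Aᶜ * u)
    (hlow : ∀ i ∉ A, exp (x i) ≤ u * ∑ j, exp (x j)) (i : ι) :
    let μ := log (1 - #Aᶜ * u) - log (∑ j ∈ A, exp (x j))
    log (boundedSoftmax x u A i) - x i = μ ∨
      (boundedSoftmax x u A i = u ∧ μ ≤ log (boundedSoftmax x u A i) - x i) := by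
  have hS : 0 < ∑ j ∈ A, exp (x j) := sum_pos (fun j _ => exp_pos _) hA
  by_cases hi : i ∈ A
  · left
    rw [boundedSoftmax, if_pos hi, log_mul (div_pos (exp_pos _) hS).ne' hQ.ne',
      log_div (exp_pos _).ne' hS.ne', log_exp]
    ring
  · right
    rw [boundedSoftmax, if_neg hi]
    refine ⟨rfl, ?_⟩
    have hmass := sum_sub_card_compl_mul_le A hlow
    have hratio : exp (x i) * (1 - #Aᶜ * u) ≤ u * ∑ j ∈ A, exp (x j) :=
      calc exp (x i) * (1 - #Aᶜ * u) ≤ (u * ∑ j, exp (x j)) * (1 - #Aᶜ * u) :=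
            mul_le_mul_of_nonneg_right (hlow i hi) hQ.le
        _ = u * (∑ j, exp (x j) - #Aᶜ * (u * ∑ j, exp (x j))) := by ring
        _ ≤ u * ∑ j ∈ A, exp (x j) := mul_le_mul_of_nonneg_left hmass hu.le
    have hlog := log_le_log (by positivity) hratio
    rw [log_mul (exp_pos _).ne' hQ.ne', log_exp, log_mul hu.ne' hS.ne'] at hlog
    linarith

end

/-- **Bounded Softmax theorem (uniqueness of the minimizer).**
Let `n ≥ 1`, `x ∈ ℝⁿ`, `0 < u < 1/n`, `A = {i : softmax_i(x) ≥ u}` and `k = #A`.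
Suppose that for every `i ∈ A` the value `(e^{x_i}/∑_{j∈A} e^{x_j})·(1−(n−k)u)` is at least `u`.
Then the vector `b` defined by `b_i = (e^{x_i}/∑_{j∈A} e^{x_j})·(1−(n−k)u)` for `i ∈ A` and
`b_i = u` otherwise is the unique minimizer of `b ↦ ∑ᵢ bᵢ ln(bᵢ) − xᵀb` over
`{b : ∑ᵢ bᵢ = 1 and bᵢ ≥ u for all i}`. -/
theorem bounded_softmax_unique_minimizer
    (n : ℕ) (hn : 1 ≤ n) (x : Fin n → ℝ) (u : ℝ) (hu0 : 0 < u) (hu1 : u < 1 / n)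
    (A : Finset (Fin n))
    (hA : A = Finset.univ.filter (fun i => u ≤ Real.exp (x i) / ∑ j, Real.exp (x j)))
    (k : ℕ) (hk : k = A.card)
    (b : Fin n → ℝ)
    (hb : ∀ i, b i = if i ∈ A then
      (Real.exp (x i) / ∑ j ∈ A, Real.exp (x j)) * (1 - ((n : ℝ) - (k : ℝ)) * u) else u)
    (hge : ∀ i ∈ A,
      u ≤ (Real.exp (x i) / ∑ j ∈ A, Real.exp (x j)) * (1 - ((n : ℝ) - (k : ℝ)) * u)) :
    ((∑ i, b i = 1 ∧ ∀ i, u ≤ b i) ∧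
      (∀ c : Fin n → ℝ, (∑ i, c i = 1 ∧ ∀ i, u ≤ c i) →
        (∑ i, b i * Real.log (b i)) - (∑ i, x i * b i)
          ≤ (∑ i, c i * Real.log (c i)) - (∑ i, x i * c i))) ∧
    (∀ c : Fin n → ℝ, (∑ i, c i = 1 ∧ ∀ i, u ≤ c i) →
      (∀ d : Fin n → ℝ, (∑ i, d i = 1 ∧ ∀ i, u ≤ d i) →
        (∑ i, c i * Real.log (c i)) - (∑ i, x i * c i)
          ≤ (∑ i, d i * Real.log (d i)) - (∑ i, x i * d i)) →
      c = b) := by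
  have : Nonempty (Fin n) := ⟨⟨0, hn⟩⟩
  have hcompl : (n : ℝ) - k = #Aᶜ := by
    rw [hk, card_compl, Fintype.card_fin, Nat.cast_sub (card_le_univ A |>.trans_eq (card_fin n))]
  rw [hcompl] at hb hge
  obtain rfl : b = boundedSoftmax x u A := funext hb
  have hmem (i : Fin n) : i ∈ A ↔ u ≤ exp (x i) / ∑ j, exp (x j) := by simp [hA]
  obtain ⟨i₀, hi₀⟩ := exists_le_softmax x (u := u) <| by
    rw [Fintype.card_fin]; exact ((lt_div_iff₀ (Nat.cast_pos.mpr hn)).mp hu1).le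
  have hAne : A.Nonempty := ⟨i₀, (hmem i₀).mpr hi₀⟩
  have hQ : 0 < 1 - #Aᶜ * u :=
    pos_of_mul_pos_right (hu0.trans_le (hge i₀ ((hmem i₀).mpr hi₀))) (by positivity)
  have hlow (i : Fin n) (hi : i ∉ A) : exp (x i) ≤ u * ∑ j, exp (x j) :=
    ((div_lt_iff₀ (by positivity)).mp (not_le.mp (mt (hmem i).mpr hi))).le
  have hbu (i : Fin n) : u ≤ boundedSoftmax x u A i := by
    unfold boundedSoftmax; split_ifs with hi
    exacts [hge i hi, le_rfl]
  have hlt (c : Fin n → ℝ) (hc : ∑ i, c i = 1 ∧ ∀ i, u ≤ c i) (hne : c ≠ boundedSoftmax x u A) :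
      entropicObjective x (boundedSoftmax x u A) < entropicObjective x c :=
    entropicObjective_lt_of_kkt hu0 hbu (boundedSoftmax_kkt hu0 hAne hQ hlow) hc.2
      (by rw [hc.1, sum_boundedSoftmax hAne]) hne
  refine ⟨⟨⟨sum_boundedSoftmax hAne, hbu⟩, fun c hc => ?_⟩, fun c hc hmin => ?_⟩
  · rcases eq_or_ne c (boundedSoftmax x u A) with rfl | hne
    exacts [le_rfl, (hlt c hc hne).le]
  · by_contra hne
    exact (hlt c hc hne).not_ge (hmin _ ⟨sum_boundedSoftmax hAne, hbu⟩)
end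

section
/- The function g(y) = (1/2)·yᵀΣy − ∑_{i=1}^n b_i ln(y_i) attains a minimum on the open positive orthant {y ∈ ℝⁿ : y_i > 0 for all i}, and the minimizer is unique. -/
open Matrix Real Finset

private lemma rb_qcont (n : ℕ) (S : Matrix (Fin n) (Fin n) ℝ) :
    Continuous (fun x : Fin n → ℝ => x ⬝ᵥ S.mulVec x) := by
  simp only [dotProduct, Matrix.mulVec]
  exact continuous_finset_sum _ fun i _ => (continuous_apply i).mul
    (continuous_finset_sum _ fun j _ => continuous_const.mul (continuous_apply j))

private lemma rb_symm (n : ℕ) (S : Matrix (Fin n) (Fin n) ℝ) (hS : S.PosDef)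
    (u v : Fin n → ℝ) : u ⬝ᵥ S.mulVec v = v ⬝ᵥ S.mulVec u := by
  simp only [dotProduct, Matrix.mulVec, Finset.mul_sum]
  rw [Finset.sum_comm]
  refine Finset.sum_congr rfl fun i _ => Finset.sum_congr rfl fun j _ => ?_
  have := hS.1.apply i j
  simp only [star_trivial] at this
  rw [← this]; ring

private lemma rb_quad_lb (n : ℕ) (hn : 1 ≤ n) (S : Matrix (Fin n) (Fin n) ℝ) (hS : S.PosDef) :
    ∃ μ > 0, ∀ y : Fin n → ℝ, μ * ∑ i, (y i)^2 ≤ y ⬝ᵥ S.mulVec y := by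
  set Sp : Set (Fin n → ℝ) := {x | ∑ i, (x i)^2 = 1} with hSp
  have hcont : Continuous (fun x : Fin n → ℝ => ∑ i, (x i)^2) := by
    continuity
  have hclosed : IsClosed Sp := isClosed_eq hcont continuous_const
  have hbdd : Bornology.IsBounded Sp := by
    apply (Metric.isBounded_closedBall (x := (0 : Fin n → ℝ)) (r := 1)).subset
    intro x hx
    simp only [Metric.mem_closedBall, dist_zero_right]
    rw [pi_norm_le_iff_of_nonneg (by norm_num)]
    intro i
    have h1 : (x i)^2 ≤ 1 := by
      rw [← hx]
      exact Finset.single_le_sum (fun j _ => sq_nonneg (x j)) (Finset.mem_univ i)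
    rw [Real.norm_eq_abs, ← Real.sqrt_one, ← Real.sqrt_sq_eq_abs]
    exact Real.sqrt_le_sqrt h1
  have hcompact : IsCompact Sp := Metric.isCompact_of_isClosed_isBounded hclosed hbdd
  have hne : Sp.Nonempty := by
    refine ⟨Pi.single ⟨0, hn⟩ 1, ?_⟩
    simp [hSp, Pi.single_apply]
  obtain ⟨x0, hx0Sp, hx0min⟩ := hcompact.exists_isMinOn hne (rb_qcont n S).continuousOn
  have hx0ne : x0 ≠ 0 := by
    intro h
    rw [h] at hx0Sp
    simp [hSp] at hx0Sp
  refine ⟨x0 ⬝ᵥ S.mulVec x0, (by simpa using hS.dotProduct_mulVec_pos hx0ne), fun y => ?_⟩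
  by_cases hy : y = 0
  · simp [hy, Matrix.mulVec_zero]
  · have hsum : 0 < ∑ i, (y i)^2 := by
      rcases Function.ne_iff.mp hy with ⟨i, hi⟩
      exact Finset.sum_pos' (fun j _ => sq_nonneg _)
        ⟨i, Finset.mem_univ i, (sq_nonneg _).lt_of_ne (Ne.symm (pow_ne_zero 2 hi))⟩
    set r : ℝ := Real.sqrt (∑ i, (y i)^2) with hr
    have hrpos : 0 < r := Real.sqrt_pos.mpr hsum
    have hrsq : r^2 = ∑ i, (y i)^2 := Real.sq_sqrt hsum.le
    have hxSp : (r⁻¹ • y) ∈ Sp := by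
      simp only [hSp, Set.mem_setOf_eq, Pi.smul_apply, smul_eq_mul]
      have : ∑ i, (r⁻¹ * y i)^2 = r⁻¹^2 * ∑ i, (y i)^2 := by
        rw [Finset.mul_sum]; congr 1; ext i; ring
      rw [this, ← hrsq]
      field_simp
    have hle : x0 ⬝ᵥ S.mulVec x0 ≤ (r⁻¹ • y) ⬝ᵥ S.mulVec (r⁻¹ • y) := hx0min hxSp
    have hcalc : (r⁻¹ • y) ⬝ᵥ S.mulVec (r⁻¹ • y) = r⁻¹^2 * (y ⬝ᵥ S.mulVec y) := by
      rw [Matrix.mulVec_smul, smul_dotProduct, dotProduct_smul]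
      simp [smul_eq_mul]; ring
    rw [hcalc] at hle
    calc (x0 ⬝ᵥ S.mulVec x0) * ∑ i, (y i)^2
        ≤ (r⁻¹^2 * (y ⬝ᵥ S.mulVec y)) * ∑ i, (y i)^2 := by
          apply mul_le_mul_of_nonneg_right hle hsum.le
      _ = y ⬝ᵥ S.mulVec y := by
          rw [← hrsq]; field_simp

private lemma rb_mid (n : ℕ) (S : Matrix (Fin n) (Fin n) ℝ) (hS : S.PosDef)
    (b : Fin n → ℝ) (hb : ∀ i, 0 < b i)
    (y z : Fin n → ℝ) (hy : ∀ i, 0 < y i) (hz : ∀ i, 0 < z i) (hne : y ≠ z) :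
    (1/2) * (((1/2:ℝ) • (y+z)) ⬝ᵥ S.mulVec ((1/2:ℝ) • (y+z)))
      - ∑ i, b i * Real.log (((1/2:ℝ) • (y+z)) i)
    < (((1/2) * (y ⬝ᵥ S.mulVec y) - ∑ i, b i * Real.log (y i))
      + ((1/2) * (z ⬝ᵥ S.mulVec z) - ∑ i, b i * Real.log (z i))) / 2 := by
  have hsymm := rb_symm n S hS
  have hQm : ((1/2:ℝ) • (y+z)) ⬝ᵥ S.mulVec ((1/2:ℝ) • (y+z))
      = (1/4) * (y ⬝ᵥ S.mulVec y + 2 * (y ⬝ᵥ S.mulVec z) + z ⬝ᵥ S.mulVec z) := by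
    simp only [Matrix.mulVec_smul, smul_dotProduct, dotProduct_smul,
      Matrix.mulVec_add, add_dotProduct, dotProduct_add, smul_eq_mul]
    rw [hsymm z y]; ring
  have hQd : 0 < (y - z) ⬝ᵥ S.mulVec (y - z) := (by simpa using hS.dotProduct_mulVec_pos (sub_ne_zero.mpr hne))
  have hQd' : (y - z) ⬝ᵥ S.mulVec (y - z)
      = y ⬝ᵥ S.mulVec y - 2 * (y ⬝ᵥ S.mulVec z) + z ⬝ᵥ S.mulVec z := by
    simp only [Matrix.mulVec_sub, sub_dotProduct, dotProduct_sub]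
    rw [hsymm z y]; ring
  have hlog : ∀ i, (Real.log (y i) + Real.log (z i)) / 2 ≤ Real.log (((1/2:ℝ) • (y+z)) i) := by
    intro i
    have hc := strictConcaveOn_log_Ioi.concaveOn.2 (Set.mem_Ioi.mpr (hy i))
      (Set.mem_Ioi.mpr (hz i)) (by norm_num : (0:ℝ) ≤ 1/2) (by norm_num : (0:ℝ) ≤ 1/2)
      (by norm_num)
    simp only [smul_eq_mul] at hc
    simp only [Pi.smul_apply, Pi.add_apply, smul_eq_mul]
    calc (Real.log (y i) + Real.log (z i)) / 2
        = 1/2 * Real.log (y i) + 1/2 * Real.log (z i) := by ring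
      _ ≤ Real.log (1/2 * y i + 1/2 * z i) := hc
      _ = Real.log (1/2 * (y i + z i)) := by ring_nf
  have hlogsum : ∑ i, b i * ((Real.log (y i) + Real.log (z i)) / 2)
      ≤ ∑ i, b i * Real.log (((1/2:ℝ) • (y+z)) i) :=
    Finset.sum_le_sum fun i _ => mul_le_mul_of_nonneg_left (hlog i) (hb i).le
  have hsplit : ∑ i, b i * ((Real.log (y i) + Real.log (z i)) / 2)
      = ((∑ i, b i * Real.log (y i)) + (∑ i, b i * Real.log (z i))) / 2 := by
    rw [← Finset.sum_add_distrib, Finset.sum_div]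
    exact Finset.sum_congr rfl fun i _ => by ring
  rw [hQm]
  rw [hsplit] at hlogsum
  linarith

private lemma rb_exist (n : ℕ) (hn : 1 ≤ n) (S : Matrix (Fin n) (Fin n) ℝ)
    (b : Fin n → ℝ) (hb : ∀ i, 0 < b i) (hbsum : ∑ i, b i = 1)
    (μ : ℝ) (hμpos : 0 < μ) (hμ : ∀ y : Fin n → ℝ, μ * ∑ i, (y i)^2 ≤ y ⬝ᵥ S.mulVec y)
    (g : (Fin n → ℝ) → ℝ)
    (hg : g = fun y => (1/2) * (y ⬝ᵥ S.mulVec y) - ∑ i, b i * Real.log (y i)) :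
    ∃ y, (∀ i, 0 < y i) ∧ ∀ z, (∀ i, 0 < z i) → g y ≤ g z := by
  have hgcontK : ∀ K : Set (Fin n → ℝ), (∀ y ∈ K, ∀ i, y i ≠ 0) → ContinuousOn g K := by
    intro K hK
    rw [hg]
    apply ContinuousOn.sub
    · exact (continuous_const.mul (rb_qcont n S)).continuousOn
    · refine continuousOn_finset_sum _ fun i _ => continuousOn_const.mul ?_
      exact Real.continuousOn_log.comp (continuous_apply i).continuousOn
        (fun y hy => hK y hy i)
  set ones : Fin n → ℝ := fun _ => 1 with hones
  set c : ℝ := g ones with hc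
  obtain ⟨i0, -, hi0⟩ := Finset.exists_min_image Finset.univ b ⟨⟨0, hn⟩, Finset.mem_univ _⟩
  set β : ℝ := b i0 with hβ
  have hβpos : 0 < β := hb i0
  have hβle : ∀ i, β ≤ b i := fun i => hi0 i (Finset.mem_univ i)
  set R : ℝ := max (max (4/μ) (|c|+1)) 1 with hR
  have hR1 : (1:ℝ) ≤ R := le_max_right _ _
  have hRμ : 4/μ ≤ R := le_trans (le_max_left _ _) (le_max_left _ _)
  have hRc : |c| + 1 ≤ R := le_trans (le_max_right _ _) (le_max_left _ _)
  set ε : ℝ := min (1/2) (Real.exp (-(c + Real.log R + 1)/β)) with hε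
  have hεpos : 0 < ε := lt_min (by norm_num) (Real.exp_pos _)
  have hεle : ε ≤ 1/2 := min_le_left _ _
  set K : Set (Fin n → ℝ) := Set.Icc (fun _ => ε) (fun _ => R) with hK
  have hmemK : ∀ y : Fin n → ℝ, y ∈ K ↔ (∀ i, ε ≤ y i) ∧ (∀ i, y i ≤ R) := by
    intro y
    simp only [hK, Set.mem_Icc, Pi.le_def]
  have honesK : ones ∈ K := by
    rw [hmemK]
    exact ⟨fun i => hεle.trans (by norm_num), fun i => hR1⟩
  have hout : ∀ z : Fin n → ℝ, (∀ i, 0 < z i) → z ∉ K → c < g z := by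
    intro z hz hzK
    set r : ℝ := Real.sqrt (∑ i, (z i)^2) with hr
    have hsumpos : 0 < ∑ i, (z i)^2 :=
      Finset.sum_pos (fun i _ => pow_pos (hz i) 2) ⟨⟨0, hn⟩, Finset.mem_univ _⟩
    have hrpos : 0 < r := Real.sqrt_pos.mpr hsumpos
    have hrsq : r^2 = ∑ i, (z i)^2 := Real.sq_sqrt hsumpos.le
    have hzler : ∀ i, z i ≤ r := by
      intro i
      rw [hr, show z i = Real.sqrt ((z i)^2) from (Real.sqrt_sq (hz i).le).symm]
      exact Real.sqrt_le_sqrt (Finset.single_le_sum (fun j _ => sq_nonneg (z j)) (Finset.mem_univ i))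
    have hquad : μ * r^2 ≤ z ⬝ᵥ S.mulVec z := by rw [hrsq]; exact hμ z
    by_cases hbig : ∃ i, R < z i
    · obtain ⟨i, hi⟩ := hbig
      have hrR : R < r := lt_of_lt_of_le hi (hzler i)
      have hlogsum : ∑ j, b j * Real.log (z j) ≤ r := by
        calc ∑ j, b j * Real.log (z j) ≤ ∑ j, b j * r := by
              refine Finset.sum_le_sum fun j _ => mul_le_mul_of_nonneg_left ?_ (hb j).le
              calc Real.log (z j) ≤ Real.log r := Real.log_le_log (hz j) (hzler j)
                _ ≤ r - 1 := Real.log_le_sub_one_of_pos hrpos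
                _ ≤ r := by linarith
          _ = r := by rw [← Finset.sum_mul, hbsum, one_mul]
      have hμr : 4 ≤ μ * r := by
        rw [div_le_iff₀ hμpos] at hRμ
        nlinarith
      have hq2 : 2 * r ≤ (1/2) * (μ * r^2) := by nlinarith
      have : c < g z := by
        rw [hg]
        have hcr : c < r := by
          have : |c| < r := lt_of_lt_of_le (by linarith) hrR.le
          linarith [le_abs_self c, this]
        have : (1/2) * (μ * r^2) - r ≤ (1/2) * (z ⬝ᵥ S.mulVec z) - ∑ j, b j * Real.log (z j) := by
          have := hquad
          nlinarith
        linarith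
      exact this
    · push_neg at hbig
      have hsmall : ∃ i, z i < ε := by
        by_contra hcon
        push_neg at hcon
        exact hzK ((hmemK z).mpr ⟨hcon, hbig⟩)
      obtain ⟨i, hi⟩ := hsmall
      have hlogR0 : 0 ≤ Real.log R := Real.log_nonneg hR1
      have hlogε : Real.log ε ≤ -(c + Real.log R + 1)/β := by
        calc Real.log ε ≤ Real.log (Real.exp (-(c + Real.log R + 1)/β)) :=
              Real.log_le_log hεpos (min_le_right _ _)
          _ = -(c + Real.log R + 1)/β := Real.log_exp _
      have hlogεneg : Real.log ε < 0 :=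
        Real.log_neg hεpos (lt_of_le_of_lt hεle (by norm_num))
      have hterm1 : b i * Real.log (z i) ≤ -(c + Real.log R + 1) := by
        calc b i * Real.log (z i) ≤ b i * Real.log ε :=
              mul_le_mul_of_nonneg_left (Real.log_le_log (hz i) hi.le) (hb i).le
          _ ≤ β * Real.log ε := mul_le_mul_of_nonpos_right (hβle i) hlogεneg.le
          _ ≤ β * (-(c + Real.log R + 1)/β) := mul_le_mul_of_nonneg_left hlogε hβpos.le
          _ = -(c + Real.log R + 1) := by field_simp
      have hterm2 : ∑ j ∈ Finset.univ.erase i, b j * Real.log (z j) ≤ Real.log R := by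
        calc ∑ j ∈ Finset.univ.erase i, b j * Real.log (z j)
            ≤ ∑ j ∈ Finset.univ.erase i, b j * Real.log R := by
              refine Finset.sum_le_sum fun j _ => mul_le_mul_of_nonneg_left ?_ (hb j).le
              exact Real.log_le_log (hz j) (hbig j)
          _ = (∑ j ∈ Finset.univ.erase i, b j) * Real.log R := by rw [Finset.sum_mul]
          _ ≤ 1 * Real.log R := by
              refine mul_le_mul_of_nonneg_right ?_ hlogR0
              rw [← hbsum]
              exact Finset.sum_le_sum_of_subset_of_nonneg (Finset.erase_subset _ _)
                (fun j _ _ => (hb j).le)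
          _ = Real.log R := one_mul _
      have hlogsum : ∑ j, b j * Real.log (z j) ≤ -c - 1 := by
        rw [← Finset.add_sum_erase Finset.univ _ (Finset.mem_univ i)]
        linarith
      have hquad0 : 0 ≤ z ⬝ᵥ S.mulVec z :=
        le_trans (by positivity) (hμ z)
      rw [hg]
      simp only
      linarith
  have hKcomp : IsCompact K := isCompact_Icc
  obtain ⟨y, hyK, hymin⟩ := hKcomp.exists_isMinOn ⟨ones, honesK⟩
    (hgcontK K fun y hy i => (lt_of_lt_of_le hεpos (((hmemK y).mp hy).1 i)).ne')
  refine ⟨y, fun i => lt_of_lt_of_le hεpos (((hmemK y).mp hyK).1 i), fun z hz => ?_⟩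
  by_cases hzK : z ∈ K
  · exact hymin hzK
  · exact le_trans (hymin honesK) (hout z hz hzK).le

/-- **Existence and uniqueness for the convex risk budgeting reformulation.** For a symmetric
positive definite `Σ` and risk budgets `bᵢ > 0` with `∑ᵢ bᵢ = 1`, the function
`g(y) = (1/2)·yᵀΣy − ∑ᵢ bᵢ ln(yᵢ)` attains a minimum on the open positive orthant, and the
minimizer is unique. -/
theorem riskBudgeting_objective_existsUnique_min
    (n : ℕ) (hn : 1 ≤ n) (S : Matrix (Fin n) (Fin n) ℝ) (hS : S.PosDef)
    (b : Fin n → ℝ) (hb : ∀ i, 0 < b i) (hbsum : ∑ i, b i = 1) :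
    ∃! y : Fin n → ℝ, (∀ i, 0 < y i) ∧
      ∀ z : Fin n → ℝ, (∀ i, 0 < z i) →
        (1 / 2) * (y ⬝ᵥ S.mulVec y) - ∑ i, b i * Real.log (y i)
          ≤ (1 / 2) * (z ⬝ᵥ S.mulVec z) - ∑ i, b i * Real.log (z i) := by
  obtain ⟨μ, hμpos, hμ⟩ := rb_quad_lb n hn S hS
  obtain ⟨y, hypos, hymin⟩ := rb_exist n hn S b hb hbsum μ hμpos hμ
    (fun y => (1/2) * (y ⬝ᵥ S.mulVec y) - ∑ i, b i * Real.log (y i)) rfl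
  refine ⟨y, ⟨hypos, hymin⟩, ?_⟩
  rintro z ⟨hzpos, hzmin⟩
  by_contra hne
  have hmpos : ∀ i, 0 < ((1/2:ℝ) • (z + y)) i := by
    intro i
    have h1 := hzpos i
    have h2 := hypos i
    simp only [Pi.smul_apply, Pi.add_apply, smul_eq_mul]
    positivity
  have h1 : (1/2) * (z ⬝ᵥ S.mulVec z) - ∑ i, b i * Real.log (z i)
      = (1/2) * (y ⬝ᵥ S.mulVec y) - ∑ i, b i * Real.log (y i) :=
    le_antisymm (hzmin y hypos) (hymin z hzpos)
  have h2 := rb_mid n S hS b hb z y hzpos hypos hne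
  have h3 := hymin _ hmpos
  linarith
end

section
/- Suppose y* lies in the open positive orthant and satisfies y*_i (Σy*)_i = b_i for every i, and set w = y*/(∑_{j=1}^n y*_j). Then w satisfies the risk budgeting conditions: ∑_{i=1}^n w_i = 1, w_i > 0 for all i, and w_i(Σw)_i = b_i · wᵀΣw for every i ∈ {1,…,n}. -/
open Matrix Real Finset

/-! If the risk contributions `yᵢ (Σy)ᵢ` equal budgets summing to one, then summing them gives
`yᵀΣy = 1`, so `yᵢ (Σy)ᵢ = bᵢ · yᵀΣy`. Both sides of this identity are quadratic in `y`, so it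
survives rescaling `y` to the unit simplex. -/

section RiskContribution

variable {ι R : Type*} [Fintype ι] [CommSemiring R]

theorem dotProduct_mulVec_self_eq_sum_of_mul_mulVec_eq (S : Matrix ι ι R) {b y : ι → R}
    (h : ∀ i, y i * S.mulVec y i = b i) : y ⬝ᵥ S.mulVec y = ∑ i, b i :=
  Finset.sum_congr rfl fun i _ => h i

theorem smul_mul_mulVec_smul (S : Matrix ι ι R) (c : R) (y : ι → R) (i : ι) :
    (c • y) i * S.mulVec (c • y) i = c ^ 2 * (y i * S.mulVec y i) := by
  rw [mulVec_smul, Pi.smul_apply, Pi.smul_apply, smul_eq_mul, smul_eq_mul]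
  ring

theorem smul_dotProduct_mulVec_smul (S : Matrix ι ι R) (c : R) (y : ι → R) :
    (c • y) ⬝ᵥ S.mulVec (c • y) = c ^ 2 * (y ⬝ᵥ S.mulVec y) := by
  rw [mulVec_smul, smul_dotProduct, dotProduct_smul, smul_eq_mul, smul_eq_mul, sq, mul_assoc]

theorem smul_mul_mulVec_smul_eq_mul_dotProduct (S : Matrix ι ι R) {b y : ι → R}
    (h : ∀ i, y i * S.mulVec y i = b i) (hb : ∑ i, b i = 1) (c : R) (i : ι) :
    (c • y) i * S.mulVec (c • y) i = b i * ((c • y) ⬝ᵥ S.mulVec (c • y)) := by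
  rw [smul_mul_mulVec_smul, smul_dotProduct_mulVec_smul,
    dotProduct_mulVec_self_eq_sum_of_mul_mulVec_eq S h, hb, h]
  ring

end RiskContribution

theorem normalized_solution_satisfies_risk_budgeting_general
    (n : ℕ) (hn : 1 ≤ n) (S : Matrix (Fin n) (Fin n) ℝ)
    (b : Fin n → ℝ) (hbsum : ∑ i, b i = 1)
    (y : Fin n → ℝ) (hy : ∀ i, 0 < y i)
    (hfoc : ∀ i, y i * S.mulVec y i = b i)
    (w : Fin n → ℝ) (hw : ∀ i, w i = y i / ∑ j, y j) :
    (∑ i, w i = 1) ∧ (∀ i, 0 < w i) ∧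
      ∀ i, w i * S.mulVec w i = b i * (w ⬝ᵥ S.mulVec w) := by
  have : Nonempty (Fin n) := Fin.pos_iff_nonempty.mp hn
  have hs : 0 < ∑ j, y j := Finset.sum_pos (fun i _ => hy i) univ_nonempty
  have hwy : w = (∑ j, y j)⁻¹ • y := funext fun i => by
    rw [hw, Pi.smul_apply, smul_eq_mul, div_eq_inv_mul]
  refine ⟨?_, fun i => hw i ▸ div_pos (hy i) hs, ?_⟩
  · simp_rw [hw, ← Finset.sum_div]
    exact div_self hs.ne'
  · rw [hwy]
    exact smul_mul_mulVec_smul_eq_mul_dotProduct S hfoc hbsum _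

/-- **The normalized solution of the convex reformulation solves the risk budgeting problem.**
Suppose `y*` lies in the open positive orthant and satisfies `y*ᵢ (Σy*)ᵢ = bᵢ` for every `i`,
and set `w = y*/(∑ⱼ y*ⱼ)`. Then `∑ᵢ wᵢ = 1`, `wᵢ > 0` for all `i`, and
`wᵢ(Σw)ᵢ = bᵢ · wᵀΣw` for every `i`. -/
theorem normalized_solution_satisfies_risk_budgeting
    (n : ℕ) (hn : 1 ≤ n) (S : Matrix (Fin n) (Fin n) ℝ) (hS : S.PosDef)
    (b : Fin n → ℝ) (hb : ∀ i, 0 < b i) (hbsum : ∑ i, b i = 1)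
    (y : Fin n → ℝ) (hy : ∀ i, 0 < y i)
    (hfoc : ∀ i, y i * S.mulVec y i = b i)
    (w : Fin n → ℝ) (hw : ∀ i, w i = y i / ∑ j, y j) :
    (∑ i, w i = 1) ∧ (∀ i, 0 < w i) ∧
      ∀ i, w i * S.mulVec w i = b i * (w ⬝ᵥ S.mulVec w) :=
  normalized_solution_satisfies_risk_budgeting_general n hn S b hbsum y hy hfoc w hw
end
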